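/- arXiv:1602.00144 — 2 statements merged into one kernel-verified Lean document; each statement's English description precedes it below -/
import Mathlib

section
/- Let H be a subgroup of a group G with finite index n = [G : H]. Then the profinite measure satisfies μ(H) = 1/n. -/
open scoped Pointwise

universe u

noncomputable def subgroupRank {G : Type u} [Group G] (H : Subgroup G) : ℕ :=
  sInf {n : ℕ | ∃ S : Finset G, S.card = n ∧ Subgroup.closure (S : Set G) = H}

noncomputable def rankGradient (G : Type u) [Group G] : ℝ :=
  sInf {r : ℝ | ∃ U : Subgroup G, U.FiniteIndex ∧
    r = ((subgroupRank U : ℝ) - 1) / (U.index : ℝ)}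

def IsLERF (G : Type u) [Group G] : Prop :=
  ∀ H : Subgroup G, H.FG →
    ∃ 𝒮 : Set (Subgroup G), (∀ U ∈ 𝒮, U.FiniteIndex) ∧ H = sInf 𝒮

def IsLPF (G : Type u) [Group G] : Prop :=
  ∀ H : Subgroup G, H.FG → H.index = 0 →
    ∀ n : ℕ, ∃ U : Subgroup G, H ≤ U ∧ U.FiniteIndex ∧ n ≤ U.index

structure FiniteQuotient (G : Type u) [Group G] where
  K : Type u
  [grp : Group K]
  [fin : Fintype K]
  φ : G →* K
  surj : Function.Surjective φ

attribute [instance] FiniteQuotient.grp FiniteQuotient.fin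

noncomputable def profiniteMeasure {G : Type u} [Group G] (S : Set G) : ℝ :=
  sInf {r : ℝ | ∃ q : FiniteQuotient G,
    r = (Set.ncard (q.φ '' S) : ℝ) / (Fintype.card q.K : ℝ)}

def productSet {G : Type u} [Group G] {n : ℕ} (H : Fin n → Subgroup G) : Set G :=
  {g : G | ∃ f : Fin n → G, (∀ i, f i ∈ H i) ∧ g = (List.ofFn f).prod}

theorem stmt_4 {G : Type u} [Group G] (H : Subgroup G) (n : ℕ) (hn : n ≠ 0)
    (hH : H.index = n) :
    profiniteMeasure (H : Set G) = 1 / (n : ℝ) := by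
  have hFI : H.FiniteIndex := ⟨hH ▸ hn⟩
  -- key computation for an arbitrary quotient
  have key : ∀ q : FiniteQuotient G,
      (Set.ncard (q.φ '' (H : Set G)) : ℝ) / (Fintype.card q.K : ℝ)
        = 1 / ((H.map q.φ).index : ℝ) := by
    intro q
    have h1 : q.φ '' (H : Set G) = ((H.map q.φ : Subgroup q.K) : Set q.K) := by
      simp [Subgroup.coe_map]
    have h2 : Nat.card (H.map q.φ) * (H.map q.φ).index = Nat.card q.K :=
      Subgroup.card_mul_index _
    have hK : (Fintype.card q.K : ℝ) = (Nat.card (H.map q.φ) : ℝ) * ((H.map q.φ).index : ℝ) := by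
      rw [← Nat.card_eq_fintype_card, ← h2]; push_cast; ring
    have hcard : (Set.ncard (q.φ '' (H : Set G)) : ℝ) = (Nat.card (H.map q.φ) : ℝ) := by
      rw [h1, ← Nat.card_coe_set_eq]
      norm_cast
    have hpos : (0 : ℝ) < (Nat.card (H.map q.φ)) := by
      have : 0 < Nat.card (H.map q.φ) := Nat.card_pos
      exact_mod_cast this
    have hipos : (0 : ℝ) < ((H.map q.φ).index : ℝ) :=
      mod_cast Nat.pos_of_ne_zero Subgroup.index_ne_zero_of_finite
    rw [hcard, hK, div_mul_eq_div_div, div_self hpos.ne']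
  have hdvd : ∀ q : FiniteQuotient G, (H.map q.φ).index ∣ n := by
    intro q; rw [← hH]; exact H.index_map_dvd q.surj
  -- the witness quotient
  have hN : H.normalCore.FiniteIndex := Subgroup.finiteIndex_normalCore H
  haveI : Finite (G ⧸ H.normalCore) := H.normalCore.finite_quotient_of_finiteIndex
  let q0 : FiniteQuotient G :=
    { K := G ⧸ H.normalCore
      fin := Fintype.ofFinite _
      φ := QuotientGroup.mk' H.normalCore
      surj := QuotientGroup.mk'_surjective _ }
  have hq0 : (H.map q0.φ).index = n := by
    rw [← hH]
    exact Subgroup.index_map_eq H (QuotientGroup.mk'_surjective _)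
      (by rw [QuotientGroup.ker_mk']; exact Subgroup.normalCore_le H)
  have hmem : (1 / (n : ℝ)) ∈ {r : ℝ | ∃ q : FiniteQuotient G,
      r = (Set.ncard (q.φ '' (H : Set G)) : ℝ) / (Fintype.card q.K : ℝ)} := by
    exact ⟨q0, by rw [key q0, hq0]⟩
  apply le_antisymm
  · exact csInf_le ⟨0, by rintro r ⟨q, rfl⟩; positivity⟩ hmem
  · apply le_csInf ⟨_, hmem⟩
    rintro r ⟨q, rfl⟩
    rw [key q]
    have h1 : (H.map q.φ).index ≤ n := Nat.le_of_dvd (Nat.pos_of_ne_zero hn) (hdvd q)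
    have h2 : (H.map q.φ).index ≠ 0 :=
      fun h0 => hn (Nat.eq_zero_of_zero_dvd (h0 ▸ hdvd q))
    exact one_div_le_one_div_of_le (by exact_mod_cast Nat.pos_of_ne_zero h2)
      (by exact_mod_cast h1)
end

section
/- Let G be a finitely generated group with positive rank gradient, and let A, B be finitely generated subgroups of infinite proindex in G. Then there exist a finite index subgroup A₀ of A and a finite index subgroup B₀ of B such that the subgroup of G generated by A₀ ∪ B₀ has infinite index in G. -/
open scoped Pointwise

universe u

/-!
Choose `U ⊇ A` of finite index with `∇G · [G : U] ≥ d(A) + 1` and put `B' = B ∩ U`.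
If `H = A ⊔ B'` has finite index, choose `V ⊇ B` with `[H : H ∩ V] > d(B')`. Were
`(A ∩ V) ⊔ B'` of finite index `q` in `H`, Schreier's bound would give it rank at most
`q d(A) + d(B') < q (d(A) + 1)`, while the rank gradient forces rank at least
`q ∇G [G : H] + 1 ≥ q (d(A) + 1) + 1`.
-/

open Subgroup

variable {G : Type u} [Group G]

theorem subgroupRank_le_card {H : Subgroup G} {S : Finset G}
    (hS : Subgroup.closure (S : Set G) = H) : subgroupRank H ≤ S.card :=
  Nat.sInf_le ⟨S, rfl, hS⟩

theorem exists_finset_card_eq_subgroupRank {H : Subgroup G} (hH : H.FG) :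
    ∃ S : Finset G, S.card = subgroupRank H ∧ Subgroup.closure (S : Set G) = H := by
  obtain ⟨S, hS⟩ := hH
  exact Nat.sInf_mem (s := {n | ∃ S : Finset G, S.card = n ∧ Subgroup.closure (S : Set G) = H})
    ⟨S.card, S, rfl, hS⟩

theorem subgroupRank_eq_rank (H : Subgroup G) [Group.FG H] : subgroupRank H = Group.rank H := by
  classical
  apply le_antisymm
  · obtain ⟨T, hTcard, hT⟩ := Group.rank_spec H
    refine (subgroupRank_le_card (S := T.image H.subtype) ?_).trans
      (Finset.card_image_le.trans_eq hTcard)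
    rw [Finset.coe_image, ← MonoidHom.map_closure, hT, ← MonoidHom.range_eq_map, range_subtype]
  · obtain ⟨S, hScard, rfl⟩ :=
      exists_finset_card_eq_subgroupRank ((Group.fg_iff_subgroup_fg H).mp ‹_›)
    exact (rank_closure_finset_le_card S).trans_eq hScard

theorem subgroupRank_sup_le {H K : Subgroup G} (hH : H.FG) (hK : K.FG) :
    subgroupRank (H ⊔ K) ≤ subgroupRank H + subgroupRank K := by
  classical
  obtain ⟨S, hScard, hS⟩ := exists_finset_card_eq_subgroupRank hH
  obtain ⟨T, hTcard, hT⟩ := exists_finset_card_eq_subgroupRank hK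
  calc subgroupRank (H ⊔ K) ≤ (S ∪ T).card := by
        apply subgroupRank_le_card
        rw [Finset.coe_union, Subgroup.closure_union, hS, hT]
    _ ≤ subgroupRank H + subgroupRank K := hScard ▸ hTcard ▸ Finset.card_union_le S T

theorem Subgroup.FG.of_le_of_relIndex_ne_zero {K H : Subgroup G} (hH : H.FG) (hKH : K ≤ H)
    (hK : K.relIndex H ≠ 0) : K.FG := by
  have : Group.FG H := (Group.fg_iff_subgroup_fg H).mpr hH
  have : (K.subgroupOf H).FiniteIndex := ⟨hK⟩
  rw [← Group.fg_iff_subgroup_fg]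
  exact Group.fg_of_surjective (f := (subgroupOfEquivOfLe hKH).toMonoidHom)
    (subgroupOfEquivOfLe hKH).surjective

theorem subgroupRank_le_relIndex_mul {K H : Subgroup G} (hH : H.FG) (hKH : K ≤ H)
    (hK : K.relIndex H ≠ 0) : subgroupRank K ≤ K.relIndex H * subgroupRank H := by
  have : Group.FG H := (Group.fg_iff_subgroup_fg H).mpr hH
  have : (K.subgroupOf H).FiniteIndex := ⟨hK⟩
  have : Group.FG K := (Group.fg_iff_subgroup_fg K).mpr (hH.of_le_of_relIndex_ne_zero hKH hK)
  rw [subgroupRank_eq_rank, subgroupRank_eq_rank, Group.rank_congr (subgroupOfEquivOfLe hKH).symm]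
  exact rank_le_index_mul_rank _

theorem inf_relIndex_left_ne_zero (H K : Subgroup G) [K.FiniteIndex] :
    (H ⊓ K).relIndex H ≠ 0 := by
  rw [inf_relIndex_left]
  exact mt index_eq_zero_of_relIndex_eq_zero FiniteIndex.index_ne_zero

theorem rankGradient_mul_index_add_one_le (W : Subgroup G) [W.FiniteIndex] :
    rankGradient G * W.index + 1 ≤ subgroupRank W := by
  have hbdd : BddBelow {r : ℝ | ∃ U : Subgroup G, U.FiniteIndex ∧
      r = ((subgroupRank U : ℝ) - 1) / (U.index : ℝ)} := by
    refine ⟨-1, ?_⟩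
    rintro _ ⟨U, hU, rfl⟩
    have hU1 : (1 : ℝ) ≤ U.index := by
      exact_mod_cast Nat.one_le_iff_ne_zero.mpr hU.index_ne_zero
    have hd : (0 : ℝ) ≤ subgroupRank U := Nat.cast_nonneg _
    rw [le_div_iff₀ (by linarith)]
    linarith
  have hW : (0 : ℝ) < W.index := by exact_mod_cast Nat.pos_of_ne_zero FiniteIndex.index_ne_zero
  rw [← le_sub_iff_add_le, ← le_div_iff₀ hW]
  exact csInf_le hbdd ⟨W, ‹_›, rfl⟩

theorem index_inf_sup_eq_zero {A B V : Subgroup G} (hA : A.FG) (hB : B.FG) (hBV : B ≤ V)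
    [(A ⊔ B).FiniteIndex]
    (hA_rank : (subgroupRank A : ℝ) + 1 ≤ rankGradient G * (A ⊔ B).index)
    (hV : subgroupRank B < V.relIndex (A ⊔ B)) : (A ⊓ V ⊔ B).index = 0 := by
  set H := A ⊔ B
  set H₂ := A ⊓ V ⊔ B
  by_contra hH₂
  have : H₂.FiniteIndex := ⟨hH₂⟩
  set q := H₂.relIndex H
  have hq_index : q * H.index = H₂.index := relIndex_mul_index (sup_le_sup_right inf_le_left B)
  have hq : q ≠ 0 := left_ne_zero_of_mul (hq_index ▸ hH₂)
  have hVq : V.relIndex H ≤ q := relIndex_le_of_le_left (sup_le inf_le_right hBV) hq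
  have hVH : V.relIndex H ≠ 0 := Nat.ne_zero_of_lt hV
  have hVA : V.relIndex A ≤ V.relIndex H := relIndex_le_of_le_right le_sup_left hVH
  have hA' : (A ⊓ V).relIndex A ≠ 0 := by
    rw [inf_relIndex_left]; exact mt (relIndex_eq_zero_of_le_right le_sup_left) hVH
  have hrank : subgroupRank H₂ + 1 ≤ q * subgroupRank A + q := by
    calc subgroupRank H₂ + 1 ≤ subgroupRank (A ⊓ V) + subgroupRank B + 1 := by
          gcongr
          exact subgroupRank_sup_le (hA.of_le_of_relIndex_ne_zero inf_le_left hA') hB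
      _ ≤ V.relIndex A * subgroupRank A + V.relIndex H := by
          have := subgroupRank_le_relIndex_mul hA inf_le_left hA'
          rw [inf_relIndex_left] at this
          omega
      _ ≤ q * subgroupRank A + q := by gcongr; omega
  have hgrad := rankGradient_mul_index_add_one_le H₂
  rw [← hq_index] at hgrad
  have hrankR : (subgroupRank H₂ : ℝ) + 1 ≤ q * (subgroupRank A + 1) := by
    rw [mul_add_one]; exact_mod_cast hrank
  have := mul_le_mul_of_nonneg_left hA_rank (Nat.cast_nonneg q)
  push_cast at hgrad
  nlinarith

theorem stmt_6_general {G : Type u} [Group G] (hrg : 0 < rankGradient G)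
    (A B : Subgroup G) (hA : A.FG) (hB : B.FG)
    (hApi : ∀ n : ℕ, ∃ U : Subgroup G, A ≤ U ∧ U.FiniteIndex ∧ n ≤ U.index)
    (hBpi : ∀ n : ℕ, ∃ U : Subgroup G, B ≤ U ∧ U.FiniteIndex ∧ n ≤ U.index) :
    ∃ (A₀ B₀ : Subgroup G), A₀ ≤ A ∧ A₀.relIndex A ≠ 0 ∧ B₀ ≤ B ∧ B₀.relIndex B ≠ 0 ∧
      (A₀ ⊔ B₀).index = 0 := by
  obtain ⟨n, hn⟩ := exists_nat_ge ((subgroupRank A + 1) / rankGradient G)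
  obtain ⟨U, hAU, hU, hUn⟩ := hApi n
  set B' := B ⊓ U
  have hB' : B'.relIndex B ≠ 0 := inf_relIndex_left_ne_zero B U
  set H := A ⊔ B'
  by_cases hH : H.index = 0
  · exact ⟨A, B', le_rfl, by simp, inf_le_left, hB', hH⟩
  have : H.FiniteIndex := ⟨hH⟩
  obtain ⟨V, hBV, hV, hVn⟩ := hBpi (H.index * (subgroupRank B' + 1))
  refine ⟨A ⊓ V, B', inf_le_left, inf_relIndex_left_ne_zero A V, inf_le_left, hB',
    index_inf_sup_eq_zero hA (hB.of_le_of_relIndex_ne_zero inf_le_left hB')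
      (inf_le_left.trans hBV) ?_ ?_⟩
  · have hnH : (n : ℝ) ≤ H.index := by
      exact_mod_cast hUn.trans (index_antitone (sup_le hAU inf_le_right))
    rw [div_le_iff₀ hrg] at hn
    nlinarith
  · have hVH : V.index ≤ V.relIndex H * H.index := by
      rw [← inf_relIndex_right, relIndex_mul_index inf_le_right]
      exact index_antitone inf_le_left
    rw [mul_comm] at hVn
    exact Nat.le_of_mul_le_mul_right (hVn.trans hVH) (Nat.pos_of_ne_zero hH)

theorem stmt_6 {G : Type u} [Group G] (hfg : Group.FG G) (hrg : 0 < rankGradient G)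
    (A B : Subgroup G) (hA : A.FG) (hB : B.FG)
    (hApi : ∀ n : ℕ, ∃ U : Subgroup G, A ≤ U ∧ U.FiniteIndex ∧ n ≤ U.index)
    (hBpi : ∀ n : ℕ, ∃ U : Subgroup G, B ≤ U ∧ U.FiniteIndex ∧ n ≤ U.index) :
    ∃ (A₀ B₀ : Subgroup G), A₀ ≤ A ∧ A₀.relIndex A ≠ 0 ∧ B₀ ≤ B ∧ B₀.relIndex B ≠ 0 ∧
      (A₀ ⊔ B₀).index = 0 :=
  stmt_6_general hrg A B hA hB hApi hBpi
end
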